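/- For positive real numbers a, b, c let σ₁ := a² + b² + c², σ₂ := a²b² + b²c² + c²a², σ₃ := a²b²c², and define scal(a,b,c) := 8σ₁ − 2σ₂²/σ₃ and ã₂(a,b,c) := 1856σ₁² − 2080σ₁σ₂²/σ₃ + 404σ₂⁴/σ₃² + 2304σ₂. Let a, b, c, a', b', c' be positive real numbers with scal(a,b,c) ≤ 0 and scal(a',b',c') ≤ 0. If abc = a'b'c', scal(a,b,c) = scal(a',b',c'), and ã₂(a,b,c) = ã₂(a',b',c'), then the multiset {a, b, c} equals the multiset {a', b', c'}, i.e. (a',b',c') is a permutation of (a,b,c). -/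
import Mathlib
set_option maxHeartbeats 2000000


/-- `σ₁ = a² + b² + c²`. -/
def diracSigma1 (a b c : ℝ) : ℝ := a^2 + b^2 + c^2

/-- `σ₂ = a²b² + b²c² + c²a²`. -/
def diracSigma2 (a b c : ℝ) : ℝ := a^2*b^2 + b^2*c^2 + c^2*a^2

/-- `σ₃ = a²b²c²`. -/
def diracSigma3 (a b c : ℝ) : ℝ := a^2*b^2*c^2

/-- The scalar curvature `scal = 8σ₁ − 2σ₂²/σ₃`. -/
noncomputable def diracScal' (a b c : ℝ) : ℝ :=
  8 * diracSigma1 a b c - 2 * (diracSigma2 a b c)^2 / diracSigma3 a b c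

/-- `ã₂ = 8‖Ric‖² + 7‖R‖² = 1856σ₁² − 2080σ₁σ₂²/σ₃ + 404σ₂⁴/σ₃² + 2304σ₂`. -/
noncomputable def diracA2 (a b c : ℝ) : ℝ :=
  1856 * (diracSigma1 a b c)^2
    - 2080 * diracSigma1 a b c * (diracSigma2 a b c)^2 / diracSigma3 a b c
    + 404 * (diracSigma2 a b c)^4 / (diracSigma3 a b c)^2
    + 2304 * diracSigma2 a b c

lemma ms3_213 (x y z : ℝ) : ({x, y, z} : Multiset ℝ) = {y, x, z} :=
  Multiset.cons_swap x y {z}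

lemma ms3_132 (x y z : ℝ) : ({x, y, z} : Multiset ℝ) = {x, z, y} :=
  congrArg (x ::ₘ ·) (Multiset.cons_swap y z 0)

lemma ms3_231 (x y z : ℝ) : ({x, y, z} : Multiset ℝ) = {y, z, x} := by
  rw [ms3_213 x y z, ms3_132 y x z]

lemma ms3_312 (x y z : ℝ) : ({x, y, z} : Multiset ℝ) = {z, x, y} := by
  rw [ms3_132 x y z, ms3_213 x z y]

lemma ms3_321 (x y z : ℝ) : ({x, y, z} : Multiset ℝ) = {z, y, x} := by
  rw [ms3_231 x y z, ms3_213 y z x]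

lemma dirac_sq_inj (x y : ℝ) (hx : 0 < x) (hy : 0 < y) (h : x^2 = y^2) : x = y := by
  have h2 : (x - y) * (x + y) = 0 := by linear_combination h
  rcases mul_eq_zero.mp h2 with h3 | h3
  · linarith
  · linarith

lemma dirac_pair (b c b' c' : ℝ) (hb : 0 < b) (hc : 0 < c) (hb' : 0 < b') (hc' : 0 < c')
    (hsum : b^2 + c^2 = b'^2 + c'^2) (hprod : b * c = b' * c') :
    b = b' ∧ c = c' ∨ b = c' ∧ c = b' := by
  have hz : (b + c - b' - c') * (b + c + b' + c') = 0 := by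
    linear_combination hsum + 2 * hprod
  have hbc : b + c = b' + c' := by
    rcases mul_eq_zero.mp hz with h | h
    · linarith
    · linarith
  have key : (b - b') * (b - c') = 0 := by linear_combination b * hbc - hprod
  rcases mul_eq_zero.mp key with h | h
  · left
    have h1 : b = b' := by linarith
    refine ⟨h1, ?_⟩
    rw [← h1] at hprod
    exact mul_left_cancel₀ (ne_of_gt hb) hprod
  · right
    have h1 : b = c' := by linarith
    exact ⟨h1, by linarith⟩

lemma dirac_scal_clear (a b c : ℝ) (ha : 0 < a) (hb : 0 < b) (hc : 0 < c) :
    diracScal' a b c * (a^2*b^2*c^2)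
      = 8*(a^2+b^2+c^2)*(a^2*b^2*c^2) - 2*(a^2*b^2+b^2*c^2+c^2*a^2)^2 := by
  unfold diracScal' diracSigma1 diracSigma2 diracSigma3
  field_simp

lemma dirac_A2_clear (a b c : ℝ) (ha : 0 < a) (hb : 0 < b) (hc : 0 < c) :
    diracA2 a b c * (a^2*b^2*c^2)^2
      = 1856*(a^2+b^2+c^2)^2*(a^2*b^2*c^2)^2
        - 2080*(a^2+b^2+c^2)*(a^2*b^2+b^2*c^2+c^2*a^2)^2*(a^2*b^2*c^2)
        + 404*(a^2*b^2+b^2*c^2+c^2*a^2)^4 + 2304*(a^2*b^2+b^2*c^2+c^2*a^2)*(a^2*b^2*c^2)^2 := by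
  unfold diracA2 diracSigma1 diracSigma2 diracSigma3
  field_simp

theorem dirac_sphere_spectral_rigidity_nonpos_scal (a b c a' b' c' : ℝ)
    (ha : 0 < a) (hb : 0 < b) (hc : 0 < c)
    (ha' : 0 < a') (hb' : 0 < b') (hc' : 0 < c')
    (hscal : diracScal' a b c ≤ 0) (hscal' : diracScal' a' b' c' ≤ 0)
    (hvol : a*b*c = a'*b'*c')
    (hs : diracScal' a b c = diracScal' a' b' c')
    (hA : diracA2 a b c = diracA2 a' b' c') :
    ({a, b, c} : Multiset ℝ) = ({a', b', c'} : Multiset ℝ) := by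
  have hr : (0:ℝ) < a^2*b^2*c^2 := by positivity
  have hr' : (0:ℝ) < a'^2*b'^2*c'^2 := by positivity
  have h3 : a^2*b^2*c^2 = a'^2*b'^2*c'^2 := by
    linear_combination (a*b*c + a'*b'*c') * hvol
  -- cleared scal equation, common σ₃
  have hsK : 8*(a^2+b^2+c^2)*(a^2*b^2*c^2) - 2*(a^2*b^2+b^2*c^2+c^2*a^2)^2
      = 8*(a'^2+b'^2+c'^2)*(a^2*b^2*c^2) - 2*(a'^2*b'^2+b'^2*c'^2+c'^2*a'^2)^2 := by
    have e : diracScal' a b c * (a^2*b^2*c^2) = diracScal' a' b' c' * (a'^2*b'^2*c'^2) := by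
      rw [hs, h3]
    rw [dirac_scal_clear a b c ha hb hc, dirac_scal_clear a' b' c' ha' hb' hc'] at e
    rw [e, ← h3]
  have hAK : 1856*(a^2+b^2+c^2)^2*(a^2*b^2*c^2)^2
        - 2080*(a^2+b^2+c^2)*(a^2*b^2+b^2*c^2+c^2*a^2)^2*(a^2*b^2*c^2)
        + 404*(a^2*b^2+b^2*c^2+c^2*a^2)^4 + 2304*(a^2*b^2+b^2*c^2+c^2*a^2)*(a^2*b^2*c^2)^2
      = 1856*(a'^2+b'^2+c'^2)^2*(a^2*b^2*c^2)^2
        - 2080*(a'^2+b'^2+c'^2)*(a'^2*b'^2+b'^2*c'^2+c'^2*a'^2)^2*(a^2*b^2*c^2)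
        + 404*(a'^2*b'^2+b'^2*c'^2+c'^2*a'^2)^4
        + 2304*(a'^2*b'^2+b'^2*c'^2+c'^2*a'^2)*(a^2*b^2*c^2)^2 := by
    have e : diracA2 a b c * (a^2*b^2*c^2)^2 = diracA2 a' b' c' * (a'^2*b'^2*c'^2)^2 := by
      rw [hA, h3]
    rw [dirac_A2_clear a b c ha hb hc, dirac_A2_clear a' b' c' ha' hb' hc'] at e
    rw [e, ← h3]
  have hK : 8*(a^2+b^2+c^2)*(a^2*b^2*c^2) - 2*(a^2*b^2+b^2*c^2+c^2*a^2)^2 ≤ 0 := by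
    rw [← dirac_scal_clear a b c ha hb hc]
    exact mul_nonpos_iff.mpr (Or.inr ⟨hscal, hr.le⟩)
  -- q = q'
  have key : ((a^2*b^2+b^2*c^2+c^2*a^2) - (a'^2*b'^2+b'^2*c'^2+c'^2*a'^2)) *
      (2304*(a^2*b^2*c^2)^2
        - 144*(8*(a^2+b^2+c^2)*(a^2*b^2*c^2) - 2*(a^2*b^2+b^2*c^2+c^2*a^2)^2)
          * ((a^2*b^2+b^2*c^2+c^2*a^2) + (a'^2*b'^2+b'^2*c'^2+c'^2*a'^2))) = 0 := by
    linear_combination hAK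
      - (29*((8*(a^2+b^2+c^2)*(a^2*b^2*c^2) - 2*(a^2*b^2+b^2*c^2+c^2*a^2)^2)
            + (8*(a'^2+b'^2+c'^2)*(a^2*b^2*c^2) - 2*(a'^2*b'^2+b'^2*c'^2+c'^2*a'^2)^2))
          - 144*(a'^2*b'^2+b'^2*c'^2+c'^2*a'^2)^2) * hsK
  have hq : a^2*b^2+b^2*c^2+c^2*a^2 = a'^2*b'^2+b'^2*c'^2+c'^2*a'^2 := by
    rcases mul_eq_zero.mp key with h | h
    · linarith
    · exfalso
      have hq1 : (0:ℝ) < a^2*b^2+b^2*c^2+c^2*a^2 := by positivity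
      have hq2 : (0:ℝ) < a'^2*b'^2+b'^2*c'^2+c'^2*a'^2 := by positivity
      nlinarith [mul_nonneg (neg_nonneg.mpr hK) (add_pos hq1 hq2).le, mul_pos hr hr]
  have hp : a^2+b^2+c^2 = a'^2+b'^2+c'^2 := by
    have h8 : (a^2+b^2+c^2) * (a^2*b^2*c^2) = (a'^2+b'^2+c'^2) * (a^2*b^2*c^2) := by
      rw [hq] at hsK; linarith
    exact mul_right_cancel₀ (ne_of_gt hr) h8
  -- root equation
  have root_a : (a^2 - a'^2) * (a^2 - b'^2) * (a^2 - c'^2) = 0 := by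
    linear_combination a^4 * hp - a^2 * hq + h3
  rcases mul_eq_zero.mp root_a with h | hcc
  · rcases mul_eq_zero.mp h with haa | hbb
    · -- a = a'
      have e1 : a = a' := dirac_sq_inj _ _ ha ha' (by linarith)
      have hsum : b^2 + c^2 = b'^2 + c'^2 := by linear_combination hp - (a+a')*e1
      have hprod : b * c = b' * c' := by
        have h0 : a*(b*c) = a*(b'*c') := by linear_combination hvol - (b'*c')*e1
        exact mul_left_cancel₀ (ne_of_gt ha) h0
      rcases dirac_pair b c b' c' hb hc hb' hc' hsum hprod with ⟨e2, e3⟩ | ⟨e2, e3⟩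
      · rw [e1, e2, e3]
      · rw [e1, e2, e3]; exact ms3_132 a' c' b'
    · -- a = b'
      have e1 : a = b' := dirac_sq_inj _ _ ha hb' (by linarith)
      have hsum : b^2 + c^2 = a'^2 + c'^2 := by linear_combination hp - (a+b')*e1
      have hprod : b * c = a' * c' := by
        have h0 : a*(b*c) = a*(a'*c') := by linear_combination hvol - (a'*c')*e1
        exact mul_left_cancel₀ (ne_of_gt ha) h0
      rcases dirac_pair b c a' c' hb hc ha' hc' hsum hprod with ⟨e2, e3⟩ | ⟨e2, e3⟩
      · rw [e1, e2, e3]; exact ms3_213 b' a' c'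
      · rw [e1, e2, e3]; exact ms3_312 b' c' a'
  · -- a = c'
    have e1 : a = c' := dirac_sq_inj _ _ ha hc' (by linarith)
    have hsum : b^2 + c^2 = a'^2 + b'^2 := by linear_combination hp - (a+c')*e1
    have hprod : b * c = a' * b' := by
      have h0 : a*(b*c) = a*(a'*b') := by linear_combination hvol - (a'*b')*e1
      exact mul_left_cancel₀ (ne_of_gt ha) h0
    rcases dirac_pair b c a' b' hb hc ha' hb' hsum hprod with ⟨e2, e3⟩ | ⟨e2, e3⟩
    · rw [e1, e2, e3]; exact ms3_231 c' a' b'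
    · rw [e1, e2, e3]; exact ms3_321 c' b' a'
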